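/- arXiv:0708.2280 — 5 statements merged into one kernel-verified Lean document; each statement's English description precedes it below -/
import Mathlib

section
/- Let G be a 2-Engel group. If the quotient G/Z_2(G) of G by its second center can be generated by 2 elements, then G is nilpotent of class at most 2 (i.e., its derived subgroup is contained in its center). -/
open commutatorElement

section Aux

variable {G : Type*} [Group G]

private lemma conj_center {z : G} (hz : z ∈ Subgroup.center G) (x : G) :
    x * z * x⁻¹ = z := by
  rw [Subgroup.mem_center_iff.mp hz x]
  group

private lemma conj_mem_center {z : G} (hz : z ∈ Subgroup.center G) (x : G) :
    x * z * x⁻¹ ∈ Subgroup.center G := by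
  rw [conj_center hz x]; exact hz

/-- expansion of a commutator in the left argument -/
private lemma comm_mul_left (x x' y : G) :
    ⁅x * x', y⁆ = x * ⁅x', y⁆ * x⁻¹ * ⁅x, y⁆ := by
  simp only [commutatorElement_def]; group

/-- expansion of a commutator in the right argument -/
private lemma comm_mul_right (x y y' : G) :
    ⁅x, y * y'⁆ = ⁅x, y⁆ * (y * ⁅x, y'⁆ * y⁻¹) := by
  simp only [commutatorElement_def]; group

private lemma comm_inv_left (x y : G) :
    ⁅x⁻¹, y⁆ = x⁻¹ * ⁅x, y⁆⁻¹ * x⁻¹⁻¹ := by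
  simp only [commutatorElement_def]; group

private lemma comm_inv_right (x y : G) :
    ⁅x, y⁻¹⁆ = y⁻¹ * ⁅x, y⁆⁻¹ * y⁻¹⁻¹ := by
  simp only [commutatorElement_def]; group

/-- If both `⁅w,a⁆` and `⁅w,b⁆` are central, then `w` commutes with `⁅a,b⁆`. -/
private lemma commute_commutator {w a b : G}
    (h1 : ⁅w, a⁆ ∈ Subgroup.center G) (h2 : ⁅w, b⁆ ∈ Subgroup.center G) :
    Commute w ⁅a, b⁆ := by
  have key : w * ⁅a, b⁆ =
      ⁅w, a⁆ * (a * ⁅w, b⁆ * b * a⁻¹) * ⁅w, a⁆⁻¹ * (b⁻¹ * ⁅w, b⁆⁻¹ * w) := by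
    simp only [commutatorElement_def]; group
  have s1 : ⁅w, a⁆ * (a * ⁅w, b⁆ * b * a⁻¹) * ⁅w, a⁆⁻¹ = a * ⁅w, b⁆ * b * a⁻¹ := by
    rw [← Subgroup.mem_center_iff.mp h1 (a * ⁅w, b⁆ * b * a⁻¹)]
    group
  have s2 : a * (⁅w, b⁆ * (b * a⁻¹ * b⁻¹) * ⁅w, b⁆⁻¹) =
      a * (b * a⁻¹ * b⁻¹) := by
    rw [← Subgroup.mem_center_iff.mp h2 (b * a⁻¹ * b⁻¹)]
    group
  show w * ⁅a, b⁆ = ⁅a, b⁆ * w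
  calc w * ⁅a, b⁆
      = ⁅w, a⁆ * (a * ⁅w, b⁆ * b * a⁻¹) * ⁅w, a⁆⁻¹ * (b⁻¹ * ⁅w, b⁆⁻¹ * w) := key
    _ = a * ⁅w, b⁆ * b * a⁻¹ * (b⁻¹ * ⁅w, b⁆⁻¹ * w) := by rw [s1]
    _ = a * (⁅w, b⁆ * (b * a⁻¹ * b⁻¹) * ⁅w, b⁆⁻¹) * w := by group
    _ = a * (b * a⁻¹ * b⁻¹) * w := by rw [s2]
    _ = ⁅a, b⁆ * w := by simp only [commutatorElement_def]; group

/-- Main auxiliary result: if `K` is a normal subgroup whose elements have all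
commutators central, and `G = ⟨a, b⟩ K`, then in a 2-Engel group all
commutators are central. -/
private theorem main_aux (K : Subgroup G) [K.Normal]
    (hEngel : ∀ x y : G, ⁅⁅x, y⁆, y⁆ = 1) (a b : G)
    (hsup : Subgroup.closure {a, b} ⊔ K = ⊤)
    (hZ2 : ∀ w ∈ K, ∀ g : G, ⁅w, g⁆ ∈ Subgroup.center G) :
    ∀ x y : G, ⁅x, y⁆ ∈ Subgroup.center G := by
  have hZ2' : ∀ w ∈ K, ∀ g : G, ⁅g, w⁆ ∈ Subgroup.center G := by
    intro w hw g
    have : ⁅g, w⁆ = ⁅w, g⁆⁻¹ := by rw [commutatorElement_inv]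
    rw [this]
    exact inv_mem (hZ2 w hw g)
  have htop : ∀ x : G, ∃ h ∈ Subgroup.closure {a, b}, ∃ w ∈ K, x = h * w := by
    intro x
    have hx : x ∈ ((Subgroup.closure {a, b} ⊔ K : Subgroup G) : Set G) := by
      rw [hsup]; trivial
    rw [Subgroup.mul_normal] at hx
    obtain ⟨h, hh, w, hw, hhw⟩ := hx
    exact ⟨h, hh, w, hw, hhw.symm⟩
  -- Step 1: ⁅a, b⁆ is central
  have hcab : ⁅a, b⁆ ∈ Subgroup.center G := by
    rw [Subgroup.mem_center_iff]
    intro z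
    obtain ⟨h, hh, w, hw, rfl⟩ := htop z
    have hcw : Commute ⁅a, b⁆ w :=
      (commute_commutator (hZ2 w hw a) (hZ2 w hw b)).symm
    have hch : Commute ⁅a, b⁆ h := by
      refine Subgroup.closure_induction (k := ({a, b} : Set G))
        (p := fun g _ => Commute ⁅a, b⁆ g) ?_ (Commute.one_right _)
        (fun x y _ _ hx hy => hx.mul_right hy) (fun x _ hx => hx.inv_right) hh
      intro x hx
      rcases hx with rfl | rfl
      · have h1 : Commute ⁅b, x⁆ x :=
          commutatorElement_eq_one_iff_commute.mp (hEngel b x)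
        have hrw : ⁅x, b⁆ = ⁅b, x⁆⁻¹ := by rw [commutatorElement_inv]
        rw [hrw]
        exact h1.inv_left
      · exact commutatorElement_eq_one_iff_commute.mp (hEngel a x)
    exact ((hch.mul_right hcw).symm).eq
  -- Step 2: for g ∈ {a, b}, all commutators ⁅g, y⁆ are central
  have hstep2 : ∀ g : G, ⁅g, a⁆ ∈ Subgroup.center G → ⁅g, b⁆ ∈ Subgroup.center G →
      ∀ y : G, ⁅g, y⁆ ∈ Subgroup.center G := by
    intro g hga hgb y
    obtain ⟨h, hh, w, hw, rfl⟩ := htop y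
    rw [comm_mul_right]
    refine mul_mem ?_ (conj_mem_center (hZ2' w hw g) h)
    refine Subgroup.closure_induction (k := ({a, b} : Set G))
      (p := fun y _ => ⁅g, y⁆ ∈ Subgroup.center G) ?_ ?_ ?_ ?_ hh
    · intro x hx; rcases hx with rfl | rfl
      · exact hga
      · exact hgb
    · show ⁅g, (1 : G)⁆ ∈ Subgroup.center G
      rw [commutatorElement_one_right]; exact Subgroup.one_mem _
    · intro x y _ _ hx hy
      rw [comm_mul_right]
      exact mul_mem hx (conj_mem_center hy x)
    · intro x _ hx
      rw [comm_inv_right]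
      exact conj_mem_center (inv_mem hx) x⁻¹
  have hZa : ∀ y : G, ⁅a, y⁆ ∈ Subgroup.center G := by
    refine hstep2 a ?_ hcab
    rw [commutatorElement_self]; exact Subgroup.one_mem _
  have hZb : ∀ y : G, ⁅b, y⁆ ∈ Subgroup.center G := by
    refine hstep2 b ?_ ?_
    · have h1 : ⁅b, a⁆ = ⁅a, b⁆⁻¹ := by rw [commutatorElement_inv]
      rw [h1]; exact inv_mem hcab
    · rw [commutatorElement_self]; exact Subgroup.one_mem _
  -- Step 3: all commutators are central
  intro x y
  obtain ⟨h, hh, w, hw, rfl⟩ := htop x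
  rw [comm_mul_left]
  refine mul_mem (conj_mem_center (hZ2 w hw y) h) ?_
  refine Subgroup.closure_induction (k := ({a, b} : Set G))
    (p := fun x _ => ⁅x, y⁆ ∈ Subgroup.center G) ?_ ?_ ?_ ?_ hh
  · intro x hx; rcases hx with rfl | rfl
    · exact hZa y
    · exact hZb y
  · show ⁅(1 : G), y⁆ ∈ Subgroup.center G
    rw [commutatorElement_one_left]; exact Subgroup.one_mem _
  · intro u v _ _ hu hv
    rw [comm_mul_left]
    exact mul_mem (conj_mem_center hv u) hu
  · intro u _ hu
    rw [comm_inv_left]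
    exact conj_mem_center (inv_mem hu) u⁻¹

end Aux

/-- If `G` is a 2-Engel group whose quotient by the second center `Z₂(G)` can
be generated by 2 elements, then `G` is nilpotent of class at most 2, i.e. its
derived subgroup is contained in its center. -/
theorem twoEngel_quotient_second_center_two_generated_class_le_two
    {G : Type*} [Group G] (hEngel : ∀ x y : G, ⁅⁅x, y⁆, y⁆ = 1)
    (hgen : ∃ a b : G ⧸ Subgroup.upperCentralSeries G 2,
      Subgroup.closure {a, b} = ⊤) :
    commutator G ≤ Subgroup.center G := by
  obtain ⟨abar, bbar, hgen⟩ := hgen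
  obtain ⟨a, ha⟩ := QuotientGroup.mk'_surjective (Subgroup.upperCentralSeries G 2) abar
  obtain ⟨b, hb⟩ := QuotientGroup.mk'_surjective (Subgroup.upperCentralSeries G 2) bbar
  have hZ2 : ∀ w ∈ Subgroup.upperCentralSeries G 2, ∀ g : G, ⁅w, g⁆ ∈ Subgroup.center G := by
    intro w hw g
    have h1 := (Subgroup.mem_upperCentralSeries_succ_iff (n := 1)).mp hw g
    rwa [Subgroup.upperCentralSeries_one] at h1
  have hsup : Subgroup.closure {a, b} ⊔ Subgroup.upperCentralSeries G 2 = ⊤ := by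
    have hmap : (Subgroup.closure {a, b}).map
        (QuotientGroup.mk' (Subgroup.upperCentralSeries G 2)) = ⊤ := by
      rw [MonoidHom.map_closure, Set.image_insert_eq, Set.image_singleton, ha, hb, hgen]
    have h1 := Subgroup.comap_map_eq (QuotientGroup.mk' (Subgroup.upperCentralSeries G 2))
      (Subgroup.closure {a, b})
    rw [hmap, Subgroup.comap_top, QuotientGroup.ker_mk'] at h1
    exact h1.symm
  have hall := main_aux (Subgroup.upperCentralSeries G 2) hEngel a b hsup hZ2
  rw [commutator_def]
  exact Subgroup.commutator_le.mpr fun x _ y _ => hall x y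
end

section
/- Every pℰ-group that can be generated by 3 elements is nilpotent of class at most 2 (i.e., its derived subgroup is contained in its center). -/
open scoped commutatorElement

/-- For a prime `p`, a finite `p`-group `G` is a `pℰ`-group if it is a 2-Engel
group and there is `r ≥ 0` with `Ω_r(G) ≤ Z(G)` and `exp (G/G') = p ^ r`,
where `Ω_r(G)` is the subgroup generated by the elements `x` with
`x ^ (p ^ r) = 1`. -/
def IsPEpsilonGroup (p : ℕ) (G : Type*) [Group G] : Prop :=
  IsPGroup p G ∧ (∀ x y : G, ⁅⁅x, y⁆, y⁆ = 1) ∧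
    ∃ r : ℕ, Subgroup.closure {x : G | x ^ p ^ r = 1} ≤ Subgroup.center G ∧
      Monoid.exponent (G ⧸ commutator G) = p ^ r

namespace PEAux

open Subgroup

variable {G : Type*} [Group G]

/- ## Pure group identities -/

lemma idL (a b c : G) : ⁅a*b, c⁆ = a * ⁅b,c⁆ * a⁻¹ * ⁅a,c⁆ := by group

lemma idR (a b c : G) : ⁅a, b*c⁆ = ⁅a,b⁆ * (b * ⁅a,c⁆ * b⁻¹) := by group

lemma idConj (g a c : G) : ⁅g*a*g⁻¹, c⁆ = g * ⁅a, g⁻¹*c*g⁆ * g⁻¹ := by group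

lemma idInvL (a c : G) : ⁅a⁻¹, c⁆ = a⁻¹ * ⁅a,c⁆⁻¹ * a := by group

lemma idInvR (a c : G) : ⁅a, c⁻¹⁆ = c⁻¹ * ⁅a,c⁆⁻¹ * c := by group

lemma idMemL (a c : G) : ⁅a,c⁆ = a * (c * a⁻¹ * c⁻¹) := by group

lemma idMemR (a c : G) : ⁅a,c⁆ = (a * c * a⁻¹) * c⁻¹ := by group

lemma idConjMul (g x : G) : g * x * g⁻¹ = ⁅g, x⁆ * x := by group

lemma conj_eq_self {g X : G} (h : Commute g X) : g * X * g⁻¹ = X := by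
  rw [h.eq]; group

lemma conj_eq_self' {g X : G} (h : Commute g X) : g⁻¹ * X * g = X := by
  have := conj_eq_self h.inv_left
  rwa [inv_inv] at this

lemma conj_eq_one {g X : G} (h : g * X * g⁻¹ = 1) : X = 1 := by
  have hX : X = g⁻¹ * (g * X * g⁻¹) * g := by group
  rw [hX, h]; group

/- ## 2-Engel consequences -/

section Engel

lemma commE (hE : ∀ x y : G, ⁅⁅x, y⁆, y⁆ = 1) (x y : G) : Commute ⁅x,y⁆ y :=
  commutatorElement_eq_one_iff_commute.mp (hE x y)

lemma commE' (hE : ∀ x y : G, ⁅⁅x, y⁆, y⁆ = 1) (x y : G) : Commute ⁅x,y⁆ x := by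
  have h : Commute ⁅x,y⁆⁻¹ x := by
    rw [commutatorElement_inv]
    exact commE hE y x
  exact Commute.inv_left_iff.mp h

lemma commute_conj_self (hE : ∀ x y : G, ⁅⁅x, y⁆, y⁆ = 1) (x g : G) : Commute x (g * x * g⁻¹) := by
  rw [idConjMul]
  exact ((commE hE g x).symm).mul_right (Commute.refl x)

lemma commute_conj_conj (hE : ∀ x y : G, ⁅⁅x, y⁆, y⁆ = 1) (x g h : G) : Commute (g*x*g⁻¹) (h*x*h⁻¹) := by
  have base : Commute x ((g⁻¹*h)*x*(g⁻¹*h)⁻¹) := commute_conj_self hE x (g⁻¹*h)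
  show (g*x*g⁻¹) * (h*x*h⁻¹) = (h*x*h⁻¹) * (g*x*g⁻¹)
  calc (g*x*g⁻¹) * (h*x*h⁻¹)
      = g * (x * ((g⁻¹*h)*x*(g⁻¹*h)⁻¹)) * g⁻¹ := by group
    _ = g * (((g⁻¹*h)*x*(g⁻¹*h)⁻¹) * x) * g⁻¹ := by rw [base.eq]
    _ = (h*x*h⁻¹) * (g*x*g⁻¹) := by group

/-- the normal closure of a single element is abelian in a 2-Engel group -/
lemma ncl_comm (hE : ∀ x y : G, ⁅⁅x, y⁆, y⁆ = 1) (x : G) {g h : G} (hg : g ∈ Subgroup.normalClosure ({x} : Set G))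
    (hh : h ∈ Subgroup.normalClosure ({x} : Set G)) : Commute g h := by
  have base : ∀ k : G, ∀ h' ∈ Subgroup.normalClosure ({x} : Set G), Commute (k*x*k⁻¹) h' := by
    intro k h' hh'
    have hh'' : h' ∈ closure (Group.conjugatesOfSet ({x} : Set G)) := hh'
    refine closure_induction ?_ ?_ ?_ ?_ hh''
    · intro y hy
      rcases Group.mem_conjugatesOfSet_iff.mp hy with ⟨z, hz, hconj⟩
      rw [Set.mem_singleton_iff] at hz
      rw [hz] at hconj
      rcases isConj_iff.mp hconj with ⟨l, rfl⟩
      exact commute_conj_conj hE x k l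
    · exact Commute.one_right _
    · intro p q _ _ hp hq; exact hp.mul_right hq
    · intro p _ hp; exact hp.inv_right
  have hg' : g ∈ closure (Group.conjugatesOfSet ({x} : Set G)) := hg
  refine closure_induction ?_ ?_ ?_ ?_ hg'
  · intro y hy
    rcases Group.mem_conjugatesOfSet_iff.mp hy with ⟨z, hz, hconj⟩
    rw [Set.mem_singleton_iff] at hz
    rw [hz] at hconj
    rcases isConj_iff.mp hconj with ⟨l, rfl⟩
    exact base l h hh
  · exact Commute.one_left _
  · intro p q _ _ hp hq; exact hp.mul_left hq
  · intro p _ hp; exact hp.inv_left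

end Engel

/- ## normal closure membership -/

lemma mem_ncl_self (x : G) : x ∈ Subgroup.normalClosure ({x} : Set G) :=
  Subgroup.subset_normalClosure (Set.mem_singleton x)

lemma mem_nclR (A z : G) : ⁅A, z⁆ ∈ Subgroup.normalClosure ({z} : Set G) := by
  rw [idMemR]
  exact mul_mem ((Subgroup.normalClosure_normal (s := ({z} : Set G))).conj_mem z
      (mem_ncl_self z) A)
    (inv_mem (mem_ncl_self z))

lemma mem_ncl_of_mem (N : Subgroup G) [hN : N.Normal] {u : G} (hu : u ∈ N) (t : G) :
    ⁅u, t⁆ ∈ N := by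
  rw [idMemL]
  exact mul_mem hu (hN.conj_mem _ (inv_mem hu) t)

/- ## Levi-type identities -/

section Levi

/-- swapping the two last entries inverts a triple commutator -/
lemma swap (hE : ∀ x y : G, ⁅⁅x, y⁆, y⁆ = 1) (a b c : G) : ⁅⁅a,b⁆,c⁆ = ⁅⁅a,c⁆,b⁆⁻¹ := by
  have hub : Commute ⁅a,b⁆ b := commE hE a b
  have hup : Commute ⁅a,b⁆ ⁅⁅a,c⁆,b⁆ := ncl_comm hE b (mem_nclR a b) (mem_nclR ⁅a,c⁆ b)
  have hvc : ⁅⁅a,c⁆, b⁻¹*c*b⁆ = 1 := by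
    apply Commute.commutator_eq
    refine ncl_comm hE c (mem_nclR a c) ?_
    have := (Subgroup.normalClosure_normal (s := ({c} : Set G))).conj_mem c (mem_ncl_self _) b⁻¹
    simpa using this
  have h1 : ⁅⁅a,b⁆ * (b*⁅a,c⁆*b⁻¹), b*c⁆ = 1 := by
    rw [← idR]; exact hE a (b*c)
  rw [idR] at h1
  have h2 : ⁅⁅a,b⁆ * (b*⁅a,c⁆*b⁻¹), b⁆ = b * ⁅⁅a,c⁆,b⁆ * b⁻¹ := by
    rw [idL, idConj, show b⁻¹*b*b = b by group, hE a b, mul_one]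
    exact conj_eq_self ((hub.mul_right hup).mul_right hub.inv_right)
  have h3 : ⁅⁅a,b⁆ * (b*⁅a,c⁆*b⁻¹), c⁆ = ⁅⁅a,b⁆,c⁆ := by
    rw [idL, idConj, hvc]
    rw [show ⁅a,b⁆ * (b * 1 * b⁻¹) * ⁅a,b⁆⁻¹ * ⁅⁅a,b⁆,c⁆ = ⁅⁅a,b⁆,c⁆ by group]
  rw [h2, h3] at h1
  have h4 : b * (⁅⁅a,c⁆,b⁆ * ⁅⁅a,b⁆,c⁆) * b⁻¹ = 1 := by
    rw [show b * (⁅⁅a,c⁆,b⁆ * ⁅⁅a,b⁆,c⁆) * b⁻¹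
        = b * ⁅⁅a,c⁆,b⁆ * b⁻¹ * (b * ⁅⁅a,b⁆,c⁆ * b⁻¹) by group]
    exact h1
  have h5 : ⁅⁅a,c⁆,b⁆ * ⁅⁅a,b⁆,c⁆ = 1 := conj_eq_one h4
  have h6 : ⁅⁅a,b⁆,c⁆ = ⁅⁅a,c⁆,b⁆⁻¹ * (⁅⁅a,c⁆,b⁆ * ⁅⁅a,b⁆,c⁆) := by group
  rw [h6, h5, mul_one]

/-- swapping the two first entries inverts a triple commutator -/
lemma inv1 (hE : ∀ x y : G, ⁅⁅x, y⁆, y⁆ = 1) (x y z : G) : ⁅⁅y,x⁆,z⁆ = ⁅⁅x,y⁆,z⁆⁻¹ := by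
  have h : ⁅⁅x,y⁆⁻¹, z⁆ = ⁅⁅x,y⁆,z⁆⁻¹ := by
    rw [idInvL]
    exact conj_eq_self' ((commE' hE ⁅x,y⁆ z).symm.inv_right)
  rw [show (⁅y,x⁆:G) = ⁅x,y⁆⁻¹ from (commutatorElement_inv x y).symm]
  exact h

/-- cyclic symmetry of triple commutators -/
lemma cyc (hE : ∀ x y : G, ⁅⁅x, y⁆, y⁆ = 1) (a b c : G) : ⁅⁅a,b⁆,c⁆ = ⁅⁅b,c⁆,a⁆ := by
  rw [swap hE a b c, inv1 hE c a b, inv_inv, swap hE c a b, inv1 hE b c a, inv_inv]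

lemma powComm (hE : ∀ x y : G, ⁅⁅x, y⁆, y⁆ = 1) (X g : G) (n : ℕ) : ⁅X^n, g⁆ = ⁅X,g⁆^n := by
  induction n with
  | zero => simp
  | succ n ih =>
    rw [pow_succ', idL, ih, conj_eq_self (((commE' hE X g).symm).pow_right n), ← pow_succ]

lemma invComm (hE : ∀ x y : G, ⁅⁅x, y⁆, y⁆ = 1) (X g : G) : ⁅X⁻¹, g⁆ = ⁅X,g⁆⁻¹ := by
  rw [idInvL]
  exact conj_eq_self' ((commE' hE X g).symm.inv_right)

lemma zpowComm (hE : ∀ x y : G, ⁅⁅x, y⁆, y⁆ = 1) (X g : G) (m : ℤ) : ⁅X^m, g⁆ = ⁅X,g⁆^m := by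
  cases m with
  | ofNat n =>
    simpa using powComm hE X g n
  | negSucc n =>
    rw [zpow_negSucc, invComm hE, powComm hE, zpow_negSucc]

/-- removing an inverse from the middle entry of a triple commutator, assuming
the triple commutator is central -/
lemma invMid (hE : ∀ x y : G, ⁅⁅x, y⁆, y⁆ = 1) (x y z : G) (hq : ∀ t, Commute ⁅⁅x,y⁆,z⁆ t) :
    ⁅⁅x,y⁻¹⁆,z⁆ = ⁅⁅x,y⁆,z⁆⁻¹ := by
  have e0 : y⁻¹*⁅x,y⁆*y = ⁅x,y⁆ := conj_eq_self' ((commE hE x y).symm)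
  have e1 : ⁅⁅x,y⁆, y*z*y⁻¹⁆ = ⁅⁅x,y⁆,z⁆ := by
    rw [show ⁅⁅x,y⁆, y*z*y⁻¹⁆ = y * ⁅y⁻¹*⁅x,y⁆*y, z⁆ * y⁻¹ by group, e0]
    exact conj_eq_self ((hq y).symm)
  have e2 : ⁅⁅x,y⁆⁻¹, y*z*y⁻¹⁆ = ⁅⁅x,y⁆,z⁆⁻¹ := by
    rw [idInvL, e1]
    exact conj_eq_self' (((hq ⁅x,y⁆).symm).inv_right)
  rw [idInvR x y, show ⁅y⁻¹ * ⁅x,y⁆⁻¹ * y, z⁆ = y⁻¹ * ⁅⁅x,y⁆⁻¹, y*z*y⁻¹⁆ * y by group, e2]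
  exact conj_eq_self' ((hq y).symm.inv_right)

/-- removing an inverse from the last entry of a triple commutator, assuming
the triple commutator is central -/
lemma invLast (hE : ∀ x y : G, ⁅⁅x, y⁆, y⁆ = 1) (A z : G) (h : ∀ t, Commute ⁅A,z⁆ t) : ⁅A, z⁻¹⁆ = ⁅A,z⁆⁻¹ := by
  rw [idInvR]
  exact conj_eq_self' ((h z).symm.inv_right)

end Levi

/- ## slot subgroups -/

section Slots

variable (B : Subgroup G) (hBc : ∀ g x, x ∈ B → g * x * g⁻¹ ∈ B)

/-- elements whose commutator with a fixed element `t` lies in `B` -/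
def slotL (t : G) : Subgroup G where
  carrier := {d | ⁅d, t⁆ ∈ B}
  one_mem' := by simpa using one_mem B
  mul_mem' := by
    intro d e hd he
    simp only [Set.mem_setOf_eq] at *
    rw [idL]
    exact mul_mem (hBc _ _ he) hd
  inv_mem' := by
    intro d hd
    simp only [Set.mem_setOf_eq] at *
    rw [show ⁅d⁻¹, t⁆ = d⁻¹ * ⁅d,t⁆⁻¹ * (d⁻¹)⁻¹ by group]
    exact hBc _ _ (inv_mem hd)

@[simp] lemma mem_slotL {t d : G} : d ∈ slotL B hBc t ↔ ⁅d, t⁆ ∈ B := Iff.rfl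

/-- elements whose commutator with a fixed element `u` (on the right) lies in `B` -/
def slotR (u : G) : Subgroup G where
  carrier := {z | ⁅u, z⁆ ∈ B}
  one_mem' := by simpa using one_mem B
  mul_mem' := by
    intro z1 z2 h1 h2
    simp only [Set.mem_setOf_eq] at *
    rw [show ⁅u, z1*z2⁆ = ⁅u,z1⁆ * (z1 * ⁅u,z2⁆ * z1⁻¹) by group]
    exact mul_mem h1 (hBc _ _ h2)
  inv_mem' := by
    intro z h
    simp only [Set.mem_setOf_eq] at *
    rw [show ⁅u, z⁻¹⁆ = z⁻¹ * ⁅u,z⁆⁻¹ * (z⁻¹)⁻¹ by group]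
    exact hBc _ _ (inv_mem h)

@[simp] lemma mem_slotR {u z : G} : z ∈ slotR B hBc u ↔ ⁅u, z⁆ ∈ B := Iff.rfl

/-- middle slot subgroup -/
def slotM (x : G) : Subgroup G where
  carrier := {y | ∀ z : G, ⁅⁅x,y⁆,z⁆ ∈ B}
  one_mem' := by intro z; simpa using one_mem B
  mul_mem' := by
    intro y1 y2 h1 h2 z
    rw [show ⁅x, y1*y2⁆ = ⁅x,y1⁆ * (y1*⁅x,y2⁆*y1⁻¹) by group, idL, idConj]
    exact mul_mem (hBc _ _ (hBc _ _ (h2 _))) (h1 z)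
  inv_mem' := by
    intro y h z
    rw [idInvR x y,
      show ⁅y⁻¹ * ⁅x,y⁆⁻¹ * y, z⁆ = y⁻¹ * ⁅⁅x,y⁆⁻¹, y*z*y⁻¹⁆ * (y⁻¹)⁻¹ by group,
      show ⁅⁅x,y⁆⁻¹, y*z*y⁻¹⁆ = ⁅x,y⁆⁻¹ * ⁅⁅x,y⁆, y*z*y⁻¹⁆⁻¹ * (⁅x,y⁆⁻¹)⁻¹ by group]
    exact hBc _ _ (hBc _ _ (inv_mem (h _)))

@[simp] lemma mem_slotM {x y : G} : y ∈ slotM B hBc x ↔ ∀ z : G, ⁅⁅x,y⁆,z⁆ ∈ B := Iff.rfl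

/-- left slot subgroup -/
def slotL2 : Subgroup G where
  carrier := {x | ∀ y z : G, ⁅⁅x,y⁆,z⁆ ∈ B}
  one_mem' := by intro y z; simpa using one_mem B
  mul_mem' := by
    intro x1 x2 h1 h2 y z
    rw [show ⁅x1*x2, y⁆ = (x1 * ⁅x2,y⁆ * x1⁻¹) * ⁅x1,y⁆ by group, idL, idConj]
    exact mul_mem (hBc _ _ (h1 y z)) (hBc _ _ (h2 y _))
  inv_mem' := by
    intro x h y z
    rw [idInvL x y,
      show ⁅x⁻¹ * ⁅x,y⁆⁻¹ * x, z⁆ = x⁻¹ * ⁅⁅x,y⁆⁻¹, x*z*x⁻¹⁆ * (x⁻¹)⁻¹ by group,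
      show ⁅⁅x,y⁆⁻¹, x*z*x⁻¹⁆ = ⁅x,y⁆⁻¹ * ⁅⁅x,y⁆, x*z*x⁻¹⁆⁻¹ * (⁅x,y⁆⁻¹)⁻¹ by group]
    exact hBc _ _ (hBc _ _ (inv_mem (h y _)))

@[simp] lemma mem_slotL2 {x : G} : x ∈ slotL2 B hBc ↔ ∀ y z : G, ⁅⁅x,y⁆,z⁆ ∈ B := Iff.rfl

end Slots

end PEAux

open PEAux Subgroup

/-- Every `pℰ`-group that can be generated by 3 elements is nilpotent of class
at most 2, i.e. its derived subgroup is contained in its center. -/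
theorem three_generated_pEpsilonGroup_class_le_two
    (p : ℕ) (hp : p.Prime) {G : Type*} [Group G] [Finite G]
    (hG : IsPEpsilonGroup p G)
    (hgen : ∃ a b c : G, Subgroup.closure {a, b, c} = ⊤) :
    commutator G ≤ Subgroup.center G := by
  obtain ⟨hpG, hE, r, hΩ, hexp⟩ := hG
  obtain ⟨a, b, c, hgen⟩ := hgen
  -- centrality from membership in the three normal closures
  have hcentral : ∀ q : G, q ∈ Subgroup.normalClosure ({a} : Set G) →
      q ∈ Subgroup.normalClosure ({b} : Set G) → q ∈ Subgroup.normalClosure ({c} : Set G) →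
      ∀ t : G, Commute q t := by
    intro q hqa hqb hqc t
    have hta : closure ({a,b,c} : Set G) ≤ centralizer {q} := by
      rw [closure_le]
      intro g hg
      simp only [Set.mem_insert_iff, Set.mem_singleton_iff] at hg
      have : Commute q g := by
        rcases hg with rfl | rfl | rfl
        · exact ncl_comm hE g hqa (mem_ncl_self _)
        · exact ncl_comm hE g hqb (mem_ncl_self _)
        · exact ncl_comm hE g hqc (mem_ncl_self _)
      intro h hh
      rw [Set.mem_singleton_iff] at hh
      subst hh
      exact this.eq
    have ht : t ∈ centralizer {q} := hta (by rw [hgen]; exact mem_top t)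
    exact mem_centralizer_iff.mp ht q rfl
  -- w = ⁅⁅a,b⁆,c⁆ is central
  have hwc : ∀ t : G, Commute ⁅⁅a,b⁆,c⁆ t := by
    apply hcentral
    · exact mem_ncl_of_mem _ (mem_ncl_of_mem _ (mem_ncl_self a) b) c
    · exact mem_ncl_of_mem _ (mem_nclR a b) c
    · exact mem_nclR ⁅a,b⁆ c
  -- the subgroup of powers of w
  have hBc : ∀ g x : G, x ∈ Subgroup.zpowers ⁅⁅a,b⁆,c⁆ → g * x * g⁻¹ ∈ Subgroup.zpowers ⁅⁅a,b⁆,c⁆ := by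
    intro g x hx
    rcases Subgroup.mem_zpowers_iff.mp hx with ⟨k, hk⟩
    have hc : Commute g x := by
      rw [← hk]; exact ((hwc g).zpow_left k).symm
    rw [conj_eq_self hc]
    exact hx
  have hw_mem : ⁅⁅a,b⁆,c⁆ ∈ Subgroup.zpowers ⁅⁅a,b⁆,c⁆ := Subgroup.mem_zpowers _
  -- the 27 base cases
  have deg1 : ∀ x z : G, ⁅⁅x,x⁆,z⁆ ∈ Subgroup.zpowers ⁅⁅a,b⁆,c⁆ := by
    intro x z
    rw [commutatorElement_self, commutatorElement_one_left]
    exact one_mem _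
  have deg2 : ∀ x y : G, ⁅⁅x,y⁆,y⁆ ∈ Subgroup.zpowers ⁅⁅a,b⁆,c⁆ := by
    intro x y; rw [hE]; exact one_mem _
  have deg3 : ∀ x y : G, ⁅⁅x,y⁆,x⁆ ∈ Subgroup.zpowers ⁅⁅a,b⁆,c⁆ := by
    intro x y; rw [(commE' hE x y).commutator_eq]; exact one_mem _
  have hbca : ⁅⁅b,c⁆,a⁆ ∈ Subgroup.zpowers ⁅⁅a,b⁆,c⁆ := by
    rw [← cyc hE a b c]; exact hw_mem
  have hcab : ⁅⁅c,a⁆,b⁆ ∈ Subgroup.zpowers ⁅⁅a,b⁆,c⁆ := by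
    rw [cyc hE c a b]; exact hw_mem
  have hacb : ⁅⁅a,c⁆,b⁆ ∈ Subgroup.zpowers ⁅⁅a,b⁆,c⁆ := by
    rw [swap hE a c b]; exact inv_mem hw_mem
  have hbac : ⁅⁅b,a⁆,c⁆ ∈ Subgroup.zpowers ⁅⁅a,b⁆,c⁆ := by
    rw [inv1 hE a b c]; exact inv_mem hw_mem
  have hcba : ⁅⁅c,b⁆,a⁆ ∈ Subgroup.zpowers ⁅⁅a,b⁆,c⁆ := by
    rw [inv1 hE b c a, ← cyc hE a b c]; exact inv_mem hw_mem
  have all27 : ∀ x ∈ ({a,b,c} : Set G), ∀ y ∈ ({a,b,c} : Set G), ∀ z ∈ ({a,b,c} : Set G),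
      ⁅⁅x,y⁆,z⁆ ∈ Subgroup.zpowers ⁅⁅a,b⁆,c⁆ := by
    intro x hx y hy z hz
    simp only [Set.mem_insert_iff, Set.mem_singleton_iff] at hx hy hz
    rcases hx with rfl | rfl | rfl
    · rcases hy with rfl | rfl | rfl
      · rcases hz with rfl | rfl | rfl
        · exact deg1 _ _
        · exact deg1 _ _
        · exact deg1 _ _
      · rcases hz with rfl | rfl | rfl
        · exact deg3 _ _
        · exact deg2 _ _
        · exact hw_mem
      · rcases hz with rfl | rfl | rfl
        · exact deg3 _ _
        · exact hacb
        · exact deg2 _ _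
    · rcases hy with rfl | rfl | rfl
      · rcases hz with rfl | rfl | rfl
        · exact deg2 _ _
        · exact deg3 _ _
        · exact hbac
      · rcases hz with rfl | rfl | rfl
        · exact deg1 _ _
        · exact deg1 _ _
        · exact deg1 _ _
      · rcases hz with rfl | rfl | rfl
        · exact hbca
        · exact deg3 _ _
        · exact deg2 _ _
    · rcases hy with rfl | rfl | rfl
      · rcases hz with rfl | rfl | rfl
        · exact deg2 _ _
        · exact hcab
        · exact deg3 _ _
      · rcases hz with rfl | rfl | rfl
        · exact hcba
        · exact deg2 _ _
        · exact deg3 _ _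
      · rcases hz with rfl | rfl | rfl
        · exact deg1 _ _
        · exact deg1 _ _
        · exact deg1 _ _
  -- every triple commutator is a power of w
  have memB : ∀ x y z : G, ⁅⁅x,y⁆,z⁆ ∈ Subgroup.zpowers ⁅⁅a,b⁆,c⁆ := by
    have s1 : ∀ x ∈ ({a,b,c} : Set G), ∀ y ∈ ({a,b,c} : Set G), ∀ z : G,
        ⁅⁅x,y⁆,z⁆ ∈ Subgroup.zpowers ⁅⁅a,b⁆,c⁆ := by
      intro x hx y hy z
      have hle : closure ({a,b,c} : Set G) ≤ slotR (Subgroup.zpowers ⁅⁅a,b⁆,c⁆) hBc ⁅x,y⁆ :=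
        (closure_le _).mpr (fun g hg => all27 x hx y hy g hg)
      have := hle (by rw [hgen]; exact mem_top z)
      rwa [mem_slotR] at this
    have s2 : ∀ x ∈ ({a,b,c} : Set G), ∀ y z : G,
        ⁅⁅x,y⁆,z⁆ ∈ Subgroup.zpowers ⁅⁅a,b⁆,c⁆ := by
      intro x hx y z
      have hle : closure ({a,b,c} : Set G) ≤ slotM (Subgroup.zpowers ⁅⁅a,b⁆,c⁆) hBc x :=
        (closure_le _).mpr (fun g hg => (mem_slotM _ _).mpr (s1 x hx g hg))
      have := hle (by rw [hgen]; exact mem_top y)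
      rw [mem_slotM] at this
      exact this z
    intro x y z
    have hle : closure ({a,b,c} : Set G) ≤ slotL2 (Subgroup.zpowers ⁅⁅a,b⁆,c⁆) hBc :=
      (closure_le _).mpr (fun g hg => (mem_slotL2 _ _).mpr (s2 g hg))
    have := hle (by rw [hgen]; exact mem_top x)
    rw [mem_slotL2] at this
    exact this y z
  -- w has order dividing 3 (Hall-Witt)
  have hw3 : ⁅⁅a,b⁆,c⁆ ^ (3:ℕ) = 1 := by
    have hHW : (b⁻¹ * ⁅⁅b,a⁻¹⁆,c⁻¹⁆ * b) * (c⁻¹ * ⁅⁅c,b⁻¹⁆,a⁻¹⁆ * c) *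
        (a⁻¹ * ⁅⁅a,c⁻¹⁆,b⁻¹⁆ * a) = 1 := by group
    have cba_c : ∀ t, Commute ⁅⁅b,a⁆,c⁆ t := by
      intro t; rw [inv1 hE a b c]; exact (hwc t).inv_left
    have ccb_a : ∀ t, Commute ⁅⁅c,b⁆,a⁆ t := by
      intro t; rw [inv1 hE b c a, ← cyc hE a b c]; exact (hwc t).inv_left
    have cac_b : ∀ t, Commute ⁅⁅a,c⁆,b⁆ t := by
      intro t; rw [swap hE a c b]
      exact (hwc t).inv_left
    have f1' : ⁅⁅b,a⁻¹⁆,c⁆ = ⁅⁅a,b⁆,c⁆ := by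
      rw [invMid hE b a c cba_c, inv1 hE a b c, inv_inv]
    have f1 : ⁅⁅b,a⁻¹⁆,c⁻¹⁆ = ⁅⁅a,b⁆,c⁆⁻¹ := by
      rw [invLast hE _ c (by rw [f1']; exact hwc), f1']
    have f2' : ⁅⁅c,b⁻¹⁆,a⁆ = ⁅⁅a,b⁆,c⁆ := by
      rw [invMid hE c b a ccb_a, inv1 hE b c a, ← cyc hE a b c, inv_inv]
    have f2 : ⁅⁅c,b⁻¹⁆,a⁻¹⁆ = ⁅⁅a,b⁆,c⁆⁻¹ := by
      rw [invLast hE _ a (by rw [f2']; exact hwc), f2']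
    have f3' : ⁅⁅a,c⁻¹⁆,b⁆ = ⁅⁅a,b⁆,c⁆ := by
      rw [invMid hE a c b cac_b, swap hE a c b, inv_inv]
    have f3 : ⁅⁅a,c⁻¹⁆,b⁻¹⁆ = ⁅⁅a,b⁆,c⁆⁻¹ := by
      rw [invLast hE _ b (by rw [f3']; exact hwc), f3']
    rw [f1, f2, f3, conj_eq_self' ((hwc b).symm.inv_right),
      conj_eq_self' ((hwc c).symm.inv_right), conj_eq_self' ((hwc a).symm.inv_right)] at hHW
    have h9 : (⁅⁅a,b⁆,c⁆ * ⁅⁅a,b⁆,c⁆ * ⁅⁅a,b⁆,c⁆)⁻¹ = 1 := by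
      rw [← hHW]; group
    have h10 : ⁅⁅a,b⁆,c⁆ * ⁅⁅a,b⁆,c⁆ * ⁅⁅a,b⁆,c⁆ = 1 := inv_eq_one.mp h9
    rw [pow_succ, pow_succ, pow_one]
    exact h10
  -- p^r-th powers lie in the commutator subgroup
  have hmemG' : ∀ g : G, g ^ (p ^ r) ∈ commutator G := by
    intro g
    have h1 : ((g : G ⧸ commutator G)) ^ (p ^ r) = 1 := by
      rw [← hexp]; exact Monoid.pow_exponent_eq_one _
    rwa [← QuotientGroup.mk_pow, QuotientGroup.eq_one_iff] at h1
  have hcomm_sub : ∀ t : G, commutator G ≤ slotL (Subgroup.zpowers ⁅⁅a,b⁆,c⁆) hBc t := by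
    intro t
    rw [_root_.commutator_def, Subgroup.commutator_le]
    intro g1 _ g2 _
    rw [mem_slotL]
    exact memB g1 g2 t
  obtain ⟨J, hJ⟩ : ∃ J : ℤ, ⁅a,b⁆ ^ (p ^ r) = ⁅⁅a,b⁆,c⁆ ^ J := by
    have h := hcomm_sub b (hmemG' a)
    rw [mem_slotL, powComm hE] at h
    rcases Subgroup.mem_zpowers_iff.mp h with ⟨J, hJ⟩
    exact ⟨J, hJ.symm⟩
  obtain ⟨I, hI⟩ : ∃ I : ℤ, ⁅a,c⁆ ^ (p ^ r) = ⁅⁅a,b⁆,c⁆ ^ I := by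
    have h := hcomm_sub c (hmemG' a)
    rw [mem_slotL, powComm hE] at h
    rcases Subgroup.mem_zpowers_iff.mp h with ⟨I, hI⟩
    exact ⟨I, hI.symm⟩
  -- key claim : w = 1
  have hw1 : ⁅⁅a,b⁆,c⁆ = 1 := by
    have hw3Z : ⁅⁅a,b⁆,c⁆ ^ (3:ℤ) = 1 := by
      rw [show (3:ℤ) = ((3:ℕ):ℤ) by norm_num, zpow_natCast, hw3]
    by_cases h3 : (3:ℤ) ∣ J
    · -- then ⁅a,b⁆ is in Ω_r, hence central
      obtain ⟨k, hk⟩ := h3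
      have hord : ⁅a,b⁆ ^ (p ^ r) = 1 := by
        rw [hJ, hk, zpow_mul, hw3Z, one_zpow]
      have hmemΩ : ⁅a,b⁆ ∈ Subgroup.center G := hΩ (subset_closure hord)
      have hcc : Commute ⁅a,b⁆ c := (Subgroup.mem_center_iff.mp hmemΩ c).symm
      exact hcc.commutator_eq
    · -- use the element x = ⁅a,b⁆^I * ⁅a,c⁆^(-J)
      have hcab' : Commute ⁅a,b⁆ ⁅a,c⁆ :=
        ncl_comm hE a (mem_ncl_of_mem _ (mem_ncl_self a) b)
          (mem_ncl_of_mem _ (mem_ncl_self a) c)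
      have hApow : (⁅a,b⁆ ^ (I:ℤ)) ^ (p ^ r) = (⁅⁅a,b⁆,c⁆ ^ J) ^ (I:ℤ) := by
        rw [← zpow_natCast (⁅a,b⁆ ^ (I:ℤ)) (p ^ r), ← zpow_mul, mul_comm, zpow_mul,
          zpow_natCast, hJ]
      have hBpow : (⁅a,c⁆ ^ (-J:ℤ)) ^ (p ^ r) = (⁅⁅a,b⁆,c⁆ ^ I) ^ (-J:ℤ) := by
        rw [← zpow_natCast (⁅a,c⁆ ^ (-J:ℤ)) (p ^ r), ← zpow_mul, mul_comm, zpow_mul,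
          zpow_natCast, hI]
      have hxp : (⁅a,b⁆ ^ (I:ℤ) * ⁅a,c⁆ ^ (-J:ℤ)) ^ (p ^ r) = 1 := by
        rw [(hcab'.zpow_zpow I (-J)).mul_pow, hApow, hBpow, ← zpow_mul, ← zpow_mul,
          ← zpow_add, show J * I + I * -J = 0 by ring, zpow_zero]
      have hmemΩ : ⁅a,b⁆ ^ (I:ℤ) * ⁅a,c⁆ ^ (-J:ℤ) ∈ Subgroup.center G :=
        hΩ (subset_closure hxp)
      have hvb : ⁅⁅a,c⁆,b⁆ = ⁅⁅a,b⁆,c⁆⁻¹ := by rw [swap hE a c b]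
      have hxb : ⁅⁅a,b⁆ ^ (I:ℤ) * ⁅a,c⁆ ^ (-J:ℤ), b⁆ = ⁅⁅a,b⁆,c⁆ ^ J := by
        rw [idL, zpowComm hE, zpowComm hE, hE a b, hvb, one_zpow, mul_one]
        rw [show (⁅⁅a,b⁆,c⁆⁻¹ : G) ^ (-J:ℤ) = ⁅⁅a,b⁆,c⁆ ^ J by
          rw [inv_zpow, zpow_neg, inv_inv]]
        exact conj_eq_self (((hwc _).symm).zpow_right J)
      have hxb1 : ⁅⁅a,b⁆ ^ (I:ℤ) * ⁅a,c⁆ ^ (-J:ℤ), b⁆ = 1 := by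
        apply Commute.commutator_eq
        exact (Subgroup.mem_center_iff.mp hmemΩ b).symm
      have hwJ : ⁅⁅a,b⁆,c⁆ ^ (J:ℤ) = 1 := by rw [← hxb, hxb1]
      have hNat : ⁅⁅a,b⁆,c⁆ ^ (J.natAbs) = 1 := by
        rcases Int.natAbs_eq J with h | h
        · rw [← zpow_natCast, ← h, hwJ]
        · rw [← zpow_natCast, show ((J.natAbs : ℤ)) = -J by omega, zpow_neg, hwJ, inv_one]
      rcases (Nat.prime_three).eq_one_or_self_of_dvd (orderOf ⁅⁅a,b⁆,c⁆)
          (orderOf_dvd_of_pow_eq_one hw3) with h1 | h33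
      · exact orderOf_eq_one_iff.mp h1
      · exfalso
        apply h3
        have hdvd : (3:ℕ) ∣ J.natAbs := h33 ▸ orderOf_dvd_of_pow_eq_one hNat
        have h5 : ((3:ℕ):ℤ) ∣ ((J.natAbs : ℕ) : ℤ) := Int.natCast_dvd_natCast.mpr hdvd
        exact Int.dvd_natAbs.mp (by exact_mod_cast h5)
  -- finish : all triple commutators vanish
  rw [_root_.commutator_def, Subgroup.commutator_le]
  intro g1 _ g2 _
  rw [Subgroup.mem_center_iff]
  intro t
  have h := memB g1 g2 t
  rw [hw1, Subgroup.zpowers_one_eq_bot, Subgroup.mem_bot] at h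
  exact (commutatorElement_eq_one_iff_commute.mp h).symm.eq
end

section
/- Let p be a prime and let G be a finite p-group such that every element of G of order dividing p lies in the center Z(G). If G has no non-trivial abelian direct factor (i.e., whenever M and A are normal subgroups of G with M ∩ A = 1, MA = G, and A abelian, then A is trivial), then every element of G of order dividing p lies in the Frattini subgroup Φ(G). -/
/-- Let `p` be a prime and `G` a finite `p`-group in which every element of
order dividing `p` is central.  If `G` has no non-trivial abelian direct
factor, then every element of order dividing `p` lies in the Frattini
subgroup of `G`. -/
theorem omega_one_le_frattini_of_no_abelian_direct_factor
    (p : ℕ) (hp : p.Prime) {G : Type*} [Group G] [Finite G]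
    (hpG : IsPGroup p G)
    (hcentral : ∀ x : G, x ^ p = 1 → x ∈ Subgroup.center G)
    (hnofactor : ∀ M A : Subgroup G, M.Normal → A.Normal → M ⊓ A = ⊥ →
      M ⊔ A = ⊤ → (∀ x y : A, x * y = y * x) → A = ⊥) :
    ∀ x : G, x ^ p = 1 → x ∈ frattini G := by
  have : Fact p.Prime := ⟨hp⟩
  intro x hx
  -- it suffices to show x lies in every coatom (maximal subgroup) M
  rw [frattini, Order.radical, Subgroup.mem_iInf]
  intro M
  rw [Subgroup.mem_iInf]
  intro hM
  by_contra hxM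
  have hx1 : x ≠ 1 := by rintro rfl; exact hxM M.one_mem
  have hord : orderOf x = p :=
    ((Nat.dvd_prime hp).mp (orderOf_dvd_of_pow_eq_one hx)).resolve_left
      (by simpa [orderOf_eq_one_iff] using hx1)
  set A := Subgroup.zpowers x with hA
  have hxA : x ∈ A := Subgroup.mem_zpowers x
  have hAc : A ≤ Subgroup.center G := by
    rw [hA, Subgroup.zpowers_le]
    exact hcentral x hx
  have hAnormal : A.Normal :=
    ⟨fun n hn g => by rwa [Subgroup.mem_center_iff.mp (hAc hn) g, mul_inv_cancel_right]⟩
  have hMnormal : M.Normal := by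
    have hnil : Group.IsNilpotent G := hpG.isNilpotent
    exact Subgroup.NormalizerCondition.normal_of_coatom M normalizerCondition_of_isNilpotent hM
  -- M ⊓ A = ⊥
  have hinf : M ⊓ A = ⊥ := by
    rw [eq_bot_iff]
    rintro y ⟨hyM, n, rfl⟩
    simp only [Subgroup.mem_bot]
    by_contra hy1
    -- x^n ∈ M with x^n ≠ 1, orderOf x = p prime, so x ∈ M
    apply hxM
    have hpn : ¬ (p : ℤ) ∣ n := by
      rintro ⟨k, rfl⟩
      apply hy1
      rw [zpow_mul, zpow_natCast, hx, one_zpow]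
    have hcop : IsCoprime n (p : ℤ) := by
      rw [Int.isCoprime_iff_gcd_eq_one]
      exact Nat.Coprime.symm ((hp.coprime_iff_not_dvd).mpr
        (fun h => hpn ((Int.natCast_dvd_natCast.mpr h).trans (Int.natAbs_dvd.mpr dvd_rfl))))
    obtain ⟨a, b, hab⟩ := hcop
    have : x = (x ^ n) ^ a * (x ^ (p : ℤ)) ^ b := by
      rw [← zpow_mul, ← zpow_mul, ← zpow_add, mul_comm n a, mul_comm (p:ℤ) b, hab, zpow_one]
    rw [this, ← zpow_natCast x p, hx] at *
    simpa using M.mul_mem (M.zpow_mem hyM a) (M.zpow_mem M.one_mem b)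
  have hsup : M ⊔ A = ⊤ := by
    refine hM.2 (M ⊔ A) (lt_of_le_of_ne le_sup_left ?_)
    intro h
    exact hxM (h ▸ Subgroup.mem_sup_right hxA)
  have hcomm : ∀ a b : A, a * b = b * a := by
    rintro ⟨a, m, rfl⟩ ⟨b, n, rfl⟩
    ext
    simp [← zpow_add, add_comm]
  have := hnofactor M A hMnormal hAnormal hinf hsup hcomm
  rw [this] at hxA
  exact hx1 (Subgroup.mem_bot.mp hxA)
end

section
/- Let G be an E-group and let a ∈ G be such that the image of a in the abelianization G/G' has infinite order and the cyclic subgroup it generates is a direct summand of G/G' (i.e., there is a subgroup H of G/G' with ⟨aG'⟩ ∩ H trivial and ⟨aG'⟩·H = G/G'). Then a lies in the center Z(G). -/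
open Pointwise


/-- A group is an `E`-group if every element commutes with all of its
endomorphic images. -/
def IsEGroup (G : Type*) [Group G] : Prop :=
  ∀ (φ : G →* G) (x : G), x * φ x = φ x * x

/-- If `G` is an `E`-group and `a ∈ G` is such that the image of `a` in the
abelianization `G/G'` has infinite order and generates a direct summand of
`G/G'`, then `a` is central in `G`. -/
theorem mem_center_of_infinite_direct_summand_abelianization
    {G : Type*} [Group G] (hE : IsEGroup G) (a : G)
    (hinf : ¬ IsOfFinOrder (a : G ⧸ commutator G))
    (hsummand : ∃ H : Subgroup (G ⧸ commutator G),
      Subgroup.zpowers (a : G ⧸ commutator G) ⊓ H = ⊥ ∧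
      Subgroup.zpowers (a : G ⧸ commutator G) ⊔ H = ⊤) :
    a ∈ Subgroup.center G := by
  obtain ⟨H, hbot, htop⟩ := hsummand
  set b : G ⧸ commutator G := (a : G ⧸ commutator G) with hb
  -- the quotient is commutative
  have hcomm : ∀ x y : G ⧸ commutator G, x * y = y * x := by
    intro x y
    induction x using QuotientGroup.induction_on with
    | H x =>
    induction y using QuotientGroup.induction_on with
    | H y =>
    rw [← QuotientGroup.mk_mul, ← QuotientGroup.mk_mul, QuotientGroup.eq]
    open scoped commutatorElement in
    have : ⁅y⁻¹, x⁻¹⁆ ∈ commutator G := by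
      rw [commutator_def]
      exact Subgroup.commutator_mem_commutator (Subgroup.mem_top _) (Subgroup.mem_top _)
    simpa [commutatorElement_def, mul_assoc] using this
  haveI hHn : H.Normal := ⟨fun n hn g => by rw [hcomm g n, mul_assoc, mul_inv_cancel]; simpa⟩
  -- existence of the decomposition
  have key : ∀ g : G, ∃ k : ℤ, ∃ h ∈ H, b ^ k * h = (g : G ⧸ commutator G) := by
    intro g
    have hmem : (g : G ⧸ commutator G) ∈
        ((Subgroup.zpowers b : Set (G ⧸ commutator G)) * (H : Set (G ⧸ commutator G))) := by
      rw [← Subgroup.mul_normal, htop]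
      trivial
    obtain ⟨x, hx, y, hy, hxy⟩ := hmem
    obtain ⟨k, hk⟩ := Subgroup.mem_zpowers_iff.mp hx
    exact ⟨k, y, hy, by rw [hk]; exact hxy⟩
  -- uniqueness of the exponent
  have uniq : ∀ (k k' : ℤ) (h h' : G ⧸ commutator G), h ∈ H → h' ∈ H →
      b ^ k * h = b ^ k' * h' → k = k' := by
    intro k k' h h' hh hh' heq
    have h1 : b ^ (k - k') * h = h' := by
      have := congrArg (fun z => b ^ (-k') * z) heq
      simp only [← mul_assoc, ← zpow_add] at this
      rw [show -k' + k = k - k' by ring] at this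
      rw [this]
      simp
    have h2 : b ^ (k - k') ∈ Subgroup.zpowers b ⊓ H := by
      refine ⟨Subgroup.zpow_mem _ (Subgroup.mem_zpowers b) _, ?_⟩
      have : b ^ (k - k') = h' * h⁻¹ := by
        rw [← h1, mul_assoc, mul_inv_cancel, mul_one]
      rw [this]
      exact H.mul_mem hh' (H.inv_mem hh)
    rw [hbot] at h2
    have h3 : b ^ (k - k') = 1 := h2
    by_contra hne
    exact hinf (isOfFinOrder_iff_zpow_eq_one.mpr ⟨k - k', sub_ne_zero.mpr hne, h3⟩)
  -- the exponent function
  choose n h hhH hdec using key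
  have hn_mul : ∀ g₁ g₂ : G, n (g₁ * g₂) = n g₁ + n g₂ := by
    intro g₁ g₂
    refine uniq (n (g₁ * g₂)) (n g₁ + n g₂) (h (g₁ * g₂)) (h g₁ * h g₂) (hhH _) (H.mul_mem (hhH g₁) (hhH g₂)) ?_
    rw [hdec, zpow_add]
    calc (↑(g₁ * g₂) : G ⧸ commutator G) = ↑g₁ * ↑g₂ := by rw [QuotientGroup.mk_mul]
    _ = (b ^ n g₁ * h g₁) * (b ^ n g₂ * h g₂) := by rw [hdec, hdec]
    _ = b ^ n g₁ * b ^ n g₂ * (h g₁ * h g₂) := by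
        rw [mul_assoc, mul_assoc, ← mul_assoc (h g₁), hcomm (h g₁) (b ^ n g₂), mul_assoc]
  have hn_one : n 1 = 0 := by
    refine uniq (n 1) 0 (h 1) 1 (hhH 1) H.one_mem ?_
    rw [hdec]
    simp
  have hn_a : n a = 1 := by
    refine uniq (n a) 1 (h a) 1 (hhH a) H.one_mem ?_
    rw [hdec]
    simp [hb]
  -- the endomorphism
  let φ : G →* G :=
    { toFun := fun g => a ^ n g
      map_one' := by show a ^ n 1 = 1; rw [hn_one, zpow_zero]
      map_mul' := fun g₁ g₂ => by
        show a ^ n (g₁ * g₂) = a ^ n g₁ * a ^ n g₂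
        rw [hn_mul, zpow_add] }
  have hφ : ∀ g : G, φ g = a ^ n g := fun _ => rfl
  rw [Subgroup.mem_center_iff]
  intro g
  set k := n g with hk
  have hc1 : Commute g (a ^ k) := by
    have := hE φ g
    rwa [hφ] at this
  have hc2 : Commute (g * a) (a ^ (k + 1)) := by
    have := hE φ (g * a)
    rw [hφ, hn_mul, hn_a] at this
    exact this
  have hca : Commute a⁻¹ (a ^ (k + 1)) := ((Commute.refl a).zpow_right (k + 1)).inv_left
  have hc3 : Commute g (a ^ (k + 1)) := by
    have := hc2.mul_left hca
    rwa [mul_inv_cancel_right] at this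
  have hc4 : Commute g (a ^ (k + 1) * (a ^ k)⁻¹) := hc3.mul_right hc1.inv_right
  have : a ^ (k + 1) * (a ^ k)⁻¹ = a := by
    rw [← zpow_neg, ← zpow_add, show k + 1 + -k = 1 by ring, zpow_one]
  rw [this] at hc4
  exact hc4
end

section
/- Let p be a prime and let G be a finite p-group that is nilpotent of class exactly 3. If the index of G' ∩ Z(G) in the derived subgroup G' equals p, then the index of the second center Z_2(G) in G equals p^2. -/
open scoped commutatorElement

section Aux

variable {G : Type*} [Group G]

private lemma centerComm' {z : G} (hz : z ∈ Subgroup.center G) (g : G) : ⁅z, g⁆ = 1 :=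
  commutatorElement_eq_one_iff_mul_comm.mpr ((Subgroup.mem_center_iff.mp hz g).symm)

private lemma centerDrop' {z : G} (hz : z ∈ Subgroup.center G) (a g : G) :
    ⁅a * z, g⁆ = ⁅a, g⁆ := by
  have h : z * g = g * z := (Subgroup.mem_center_iff.mp hz g).symm
  calc ⁅a * z, g⁆ = a * (z * g) * z⁻¹ * a⁻¹ * g⁻¹ := by group
    _ = a * (g * z) * z⁻¹ * a⁻¹ * g⁻¹ := by rw [h]
    _ = ⁅a, g⁆ := by group

private lemma commMul' (a b g : G) (hb : ⁅b, g⁆ ∈ Subgroup.center G) :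
    ⁅a * b, g⁆ = ⁅b, g⁆ * ⁅a, g⁆ := by
  have h : a * ⁅b, g⁆ = ⁅b, g⁆ * a := Subgroup.mem_center_iff.mp hb a
  calc ⁅a * b, g⁆ = a * ⁅b, g⁆ * (g * a⁻¹ * g⁻¹) := by group
    _ = ⁅b, g⁆ * a * (g * a⁻¹ * g⁻¹) := by rw [h]
    _ = ⁅b, g⁆ * ⁅a, g⁆ := by group

private lemma commInv' (b g : G) (hb : ⁅b, g⁆ ∈ Subgroup.center G) :
    ⁅b⁻¹, g⁆ = ⁅b, g⁆⁻¹ := by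
  have h := commMul' b⁻¹ b g hb
  rw [inv_mul_cancel, commutatorElement_one_left] at h
  exact (inv_eq_of_mul_eq_one_right h.symm).symm

private lemma commZpowAux (b g : G) (H : ∀ k : ℤ, ⁅b ^ k, g⁆ ∈ Subgroup.center G) :
    ∀ k : ℤ, ⁅b ^ k, g⁆ = ⁅b, g⁆ ^ k := by
  have h1 : ⁅b, g⁆ ∈ Subgroup.center G := by simpa using H 1
  have hinv : ⁅b⁻¹, g⁆ ∈ Subgroup.center G := by
    rw [commInv' b g h1]; exact (Subgroup.center G).inv_mem h1
  intro k
  induction k using Int.induction_on with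
  | zero => simp
  | succ i ih =>
      rw [zpow_add_one, commMul' _ _ _ h1, ih, add_comm ((i : ℤ)) 1, zpow_one_add]
  | pred i ih =>
      rw [zpow_sub_one, commMul' _ _ _ hinv, commInv' b g h1, ih,
        show (-(i : ℤ) - 1) = (-1) + (-(i : ℤ)) by ring, zpow_add, zpow_neg_one]

private lemma jacobi' (hZ : ∀ u v w : G, ⁅⁅u, v⁆, w⁆ ∈ Subgroup.center G) (a b c : G) :
    ⁅⁅a, b⁆, c⁆⁻¹ * ⁅⁅b, c⁆, a⁆⁻¹ * ⁅⁅c, a⁆, b⁆⁻¹ = 1 := by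
  have inv_red : ∀ u v : G, ⁅u, v⁻¹⁆ = ⁅v, u⁆ * ⁅⁅u, v⁆, v⁻¹⁆ := fun u v => by group
  have red : ∀ u v w : G, ⁅⁅u, v⁻¹⁆, w⁆ = ⁅⁅v, u⁆, w⁆ := fun u v w => by
    rw [inv_red, centerDrop' (hZ u v v⁻¹)]
  have red3 : ∀ u v w : G, ⁅⁅u, v⁆, w⁻¹⁆ = ⁅⁅u, v⁆, w⁆⁻¹ := fun u v w => by
    rw [inv_red ⁅u, v⁆ w, centerComm' (hZ u v w) w⁻¹, mul_one, commutatorElement_inv]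
  have conjc : ∀ (z g : G), z ∈ Subgroup.center G → g⁻¹ * z * g = z := by
    intro z g hz
    rw [mul_assoc, ← Subgroup.mem_center_iff.mp hz g, ← mul_assoc, inv_mul_cancel, one_mul]
  have hw : b⁻¹ * ⁅⁅b, a⁻¹⁆, c⁻¹⁆ * b * (c⁻¹ * ⁅⁅c, b⁻¹⁆, a⁻¹⁆ * c) *
      (a⁻¹ * ⁅⁅a, c⁻¹⁆, b⁻¹⁆ * a) = 1 := by group
  rw [red b a c⁻¹, red3 a b c, red c b a⁻¹, red3 b c a, red a c b⁻¹, red3 c a b,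
    conjc _ b ((Subgroup.center G).inv_mem (hZ a b c)),
    conjc _ c ((Subgroup.center G).inv_mem (hZ b c a)),
    conjc _ a ((Subgroup.center G).inv_mem (hZ c a b))] at hw
  exact hw

end Aux

/-- Let `p` be a prime and `G` a finite `p`-group that is nilpotent of class
exactly 3.  If the index of `G' ∩ Z(G)` in the derived subgroup `G'` equals
`p`, then the index of the second center `Z₂(G)` in `G` equals `p ^ 2`. -/
theorem index_second_center_eq_p_sq
    (p : ℕ) (hp : p.Prime) {G : Type*} [Group G] [Finite G]
    (hpG : IsPGroup p G)
    (hcl : (⊤ : Subgroup G).lowerCentralSeries 3 = ⊥ ∧ (⊤ : Subgroup G).lowerCentralSeries 2 ≠ ⊥)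
    (hidx : ((commutator G ⊓ Subgroup.center G).subgroupOf
      (commutator G)).index = p) :
    (Subgroup.upperCentralSeries G 2).index = p ^ 2 := by
  classical
  haveI : Fact p.Prime := ⟨hp⟩
  obtain ⟨h4, h3⟩ := hcl
  -- basic membership facts
  have hmemD : ∀ u v : G, ⁅u, v⁆ ∈ commutator G := fun u v => by
    rw [commutator_def]
    exact Subgroup.commutator_mem_commutator (Subgroup.mem_top u) (Subgroup.mem_top v)
  have hlcs : ∀ (n : ℕ) (h g : G), h ∈ (⊤ : Subgroup G).lowerCentralSeries n →
      ⁅h, g⁆ ∈ (⊤ : Subgroup G).lowerCentralSeries (n + 1) := by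
    intro n h g hh
    rw [Subgroup.mem_lowerCentralSeries_succ_iff]
    exact Subgroup.subset_closure ⟨h, hh, g, Subgroup.mem_top g, rfl⟩
  have h2Z : ∀ h : G, h ∈ (⊤ : Subgroup G).lowerCentralSeries 2 → h ∈ Subgroup.center G := by
    intro h hh
    rw [Subgroup.mem_center_iff]
    intro g
    have h30 : ⁅h, g⁆ = 1 := by
      have := hlcs 2 h g hh
      rw [h4] at this
      simpa using this
    exact (commutatorElement_eq_one_iff_mul_comm.mp h30).symm
  have hDZ : ∀ b : G, b ∈ commutator G → ∀ g : G, ⁅b, g⁆ ∈ Subgroup.center G := by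
    intro b hb g
    exact h2Z _ (hlcs 1 b g (by rwa [Subgroup.top_lowerCentralSeries_one]))
  have hZZ : ∀ u v w : G, ⁅⁅u, v⁆, w⁆ ∈ Subgroup.center G := fun u v w => hDZ _ (hmemD u v) w
  have jac := jacobi' hZZ
  -- extract a generator of G' modulo G' ∩ Z(G)
  haveI hN : (commutator G ⊓ Subgroup.center G).Normal := by
    constructor
    intro n hn g
    rw [Subgroup.mem_inf] at hn ⊢
    exact ⟨Subgroup.Normal.conj_mem inferInstance n hn.1 g,
      Subgroup.Normal.conj_mem inferInstance n hn.2 g⟩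
  have hcard : Nat.card (↥(commutator G) ⧸
      ((commutator G ⊓ Subgroup.center G).subgroupOf (commutator G))) = p := by
    rw [← Subgroup.index_eq_card]; exact hidx
  haveI := isCyclic_of_prime_card hcard
  obtain ⟨g0, hg0⟩ := IsCyclic.exists_generator
    (α := ↥(commutator G) ⧸ ((commutator G ⊓ Subgroup.center G).subgroupOf (commutator G)))
  obtain ⟨b, hb⟩ := QuotientGroup.mk_surjective g0
  have hgen : ∀ c : G, c ∈ commutator G →
      ∃ k : ℤ, ((b : G) ^ k)⁻¹ * c ∈ Subgroup.center G := by
    intro c hc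
    obtain ⟨k, hk⟩ := Subgroup.mem_zpowers_iff.mp (hg0 (QuotientGroup.mk ⟨c, hc⟩))
    refine ⟨k, ?_⟩
    rw [← hb, ← QuotientGroup.mk_zpow] at hk
    have hmem := QuotientGroup.eq.mp hk
    rw [Subgroup.mem_subgroupOf, Subgroup.mem_inf] at hmem
    simpa using hmem.2
  have ha₀p : (b : G) ^ (p : ℕ) ∈ Subgroup.center G := by
    have hg0p : g0 ^ (p : ℕ) = 1 := by
      have h := orderOf_dvd_natCard g0
      rw [hcard] at h
      exact orderOf_dvd_iff_pow_eq_one.mp h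
    rw [← hb, ← QuotientGroup.mk_pow] at hg0p
    have hmem := (QuotientGroup.eq_one_iff _).mp hg0p
    rw [Subgroup.mem_subgroupOf, Subgroup.mem_inf] at hmem
    simpa using hmem.2
  -- choose x with ⁅b, x⁆ ≠ 1
  have hcenj : ∀ (g : G) (j : ℤ), ⁅(b : G) ^ j, g⁆ ∈ Subgroup.center G :=
    fun g j => hDZ _ (Subgroup.zpow_mem _ b.2 j) g
  obtain ⟨x, hx⟩ : ∃ x : G, ⁅(b : G), x⁆ ≠ 1 := by
    by_contra hE
    push_neg at hE
    apply h3
    rw [eq_bot_iff, Subgroup.lowerCentralSeries_succ, Subgroup.commutator_def]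
    apply (Subgroup.closure_le _).mpr
    rintro _ ⟨c, hc, q, -, rfl⟩
    rw [Subgroup.top_lowerCentralSeries_one] at hc
    obtain ⟨k, hk⟩ := hgen c hc
    have hdec : c = (b : G) ^ k * (((b : G) ^ k)⁻¹ * c) := by group
    have : ⁅c, q⁆ = (1 : G) := by
      rw [hdec, centerDrop' hk, commZpowAux _ _ (hcenj q), hE q, one_zpow]
    rw [SetLike.mem_coe, Subgroup.mem_bot]
    exact this
  have hep : ⁅(b : G), x⁆ ^ p = 1 := by
    rw [← zpow_natCast, ← commZpowAux _ _ (hcenj x), zpow_natCast]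
    exact centerComm' ha₀p x
  have horder : orderOf ⁅(b : G), x⁆ = p := orderOf_eq_prime hep hx
  -- power criterion
  have hpow_center : ∀ m : ℤ, ((b : G) ^ m ∈ Subgroup.center G ↔ (p : ℤ) ∣ m) := by
    intro m
    constructor
    · intro hm
      have h1 : ⁅(b : G), x⁆ ^ m = 1 := by
        rw [← commZpowAux _ _ (hcenj x)]
        exact centerComm' hm x
      have := orderOf_dvd_iff_zpow_eq_one.mpr h1
      rwa [horder] at this
    · rintro ⟨j, rfl⟩
      rw [zpow_mul]
      exact Subgroup.zpow_mem _ (by rw [zpow_natCast]; exact ha₀p) j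
  -- the "coordinate" function
  obtain ⟨key, hkey⟩ : ∃ key : G → ℤ, ∀ c : G, c ∈ commutator G →
      ((b : G) ^ (key c))⁻¹ * c ∈ Subgroup.center G := by
    refine ⟨fun c => if h : c ∈ commutator G then (hgen c h).choose else 0, fun c hc => ?_⟩
    simp only [dif_pos hc]
    exact (hgen c hc).choose_spec
  have huniq : ∀ c : G, c ∈ commutator G → ∀ k : ℤ,
      ((b : G) ^ k)⁻¹ * c ∈ Subgroup.center G →
      ((key c : ℤ) : ZMod p) = ((k : ℤ) : ZMod p) := by
    intro c hc k hk
    have hmem : (b : G) ^ (k - key c) ∈ Subgroup.center G := by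
      have hrw : (b : G) ^ (k - key c) =
          (((b : G) ^ (key c))⁻¹ * c) * (((b : G) ^ k)⁻¹ * c)⁻¹ := by
        rw [zpow_sub]; group
      rw [hrw]
      exact mul_mem (hkey c hc) (inv_mem hk)
    have hdvd := (hpow_center _).mp hmem
    have h0 : ((k - key c : ℤ) : ZMod p) = 0 := (ZMod.intCast_zmod_eq_zero_iff_dvd _ p).mpr hdvd
    push_cast at h0
    linear_combination -h0
  have nu_zero_iff : ∀ c : G, c ∈ commutator G →
      (((key c : ℤ) : ZMod p) = 0 ↔ c ∈ Subgroup.center G) := by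
    intro c hc
    constructor
    · intro h0
      have hdvd : (p : ℤ) ∣ key c := (ZMod.intCast_zmod_eq_zero_iff_dvd _ p).mp h0
      have hbk : (b : G) ^ (key c) ∈ Subgroup.center G := (hpow_center _).mpr hdvd
      have hdec : c = (b : G) ^ (key c) * (((b : G) ^ (key c))⁻¹ * c) := by group
      rw [hdec]
      exact mul_mem hbk (hkey c hc)
    · intro hc2
      have := huniq c hc 0 (by simpa using hc2)
      simpa using this
  have nu_add : ∀ c d : G, c ∈ commutator G → d ∈ commutator G →
      ((key (c * d) : ℤ) : ZMod p) = ((key c : ℤ) : ZMod p) + ((key d : ℤ) : ZMod p) := by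
    intro c d hc hd
    have hmem : ((b : G) ^ (key c + key d))⁻¹ * (c * d) ∈ Subgroup.center G := by
      have hcalc : ((b : G) ^ (key c + key d))⁻¹ * (c * d) =
          ((b : G) ^ (key d))⁻¹ * (((b : G) ^ (key c))⁻¹ * c) * d := by
        rw [zpow_add]; group
      rw [hcalc, Subgroup.mem_center_iff.mp (hkey c hc) (((b : G) ^ (key d))⁻¹), mul_assoc]
      exact mul_mem (hkey c hc) (hkey d hd)
    have := huniq (c * d) (mul_mem hc hd) (key c + key d) hmem
    push_cast at this
    linear_combination this
  -- x is not in the second center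
  have hcomm_z2 : ∀ t : G, t ∈ Subgroup.upperCentralSeries G 2 → ∀ u v : G, ⁅⁅u, v⁆, t⁆ = 1 := by
    intro t ht u v
    have hT : ∀ w : G, ⁅t, w⁆ ∈ Subgroup.center G := by
      intro w
      have := Subgroup.mem_upperCentralSeries_succ_iff.mp ht w
      rw [Subgroup.upperCentralSeries_one] at this
      simpa [commutatorElement_def] using this
    have j := jac u v t
    have e2 : ⁅⁅v, t⁆, u⁆ = 1 := by
      have hvt : ⁅v, t⁆ ∈ Subgroup.center G := by
        rw [← commutatorElement_inv]; exact inv_mem (hT v)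
      exact centerComm' hvt u
    have e3 : ⁅⁅t, u⁆, v⁆ = 1 := centerComm' (hT u) v
    rw [e2, e3, inv_one, mul_one, mul_one, inv_eq_one] at j
    exact j
  obtain ⟨y, hy⟩ : ∃ y : G, ⁅x, y⁆ ∉ Subgroup.center G := by
    by_contra hE
    push_neg at hE
    have hxZ2 : x ∈ Subgroup.upperCentralSeries G 2 := by
      apply Subgroup.mem_upperCentralSeries_succ_iff.mpr
      intro w
      rw [Subgroup.upperCentralSeries_one]
      simpa [commutatorElement_def] using hE w
    have hb_comm : (b : G) * x = x * (b : G) := by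
      have h1 := hcomm_z2 x hxZ2
      have hcent : commutator G ≤ Subgroup.centralizer {x} := by
        rw [commutator_def]
        apply Subgroup.commutator_le.mpr
        intro u hu v hv
        rw [Subgroup.mem_centralizer_iff]
        intro h hh
        rw [Set.mem_singleton_iff] at hh
        subst hh
        exact (commutatorElement_eq_one_iff_mul_comm.mp (h1 u v)).symm
      have := Subgroup.mem_centralizer_iff.mp (hcent b.2) x (Set.mem_singleton x)
      exact this.symm
    exact hx (commutatorElement_eq_one_iff_mul_comm.mpr hb_comm)
  have hκ : ((key ⁅x, y⁆ : ℤ) : ZMod p) ≠ 0 := fun h => hy ((nu_zero_iff _ (hmemD x y)).mp h)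
  -- the homomorphism
  have hν : ∀ u z w : G, ((key ⁅u, z * w⁆ : ℤ) : ZMod p) =
      ((key ⁅u, z⁆ : ℤ) : ZMod p) + ((key ⁅u, w⁆ : ℤ) : ZMod p) := by
    intro u z w
    have hexp : ⁅u, z * w⁆ = ⁅u, z⁆ * (⁅u, w⁆ * ⁅⁅w, u⁆, z⁆) := by group
    rw [hexp, nu_add _ _ (hmemD u z) (mul_mem (hmemD u w) (hmemD ⁅w, u⁆ z)),
      nu_add _ _ (hmemD u w) (hmemD ⁅w, u⁆ z),
      (nu_zero_iff _ (hmemD ⁅w, u⁆ z)).mpr (hZZ w u z), add_zero]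
  have hν1 : ∀ u : G, ((key ⁅u, (1 : G)⁆ : ℤ) : ZMod p) = 0 := fun u => by
    rw [commutatorElement_one_right]
    exact (nu_zero_iff _ (one_mem _)).mpr (one_mem _)
  obtain ⟨f, hf⟩ : ∃ f : G →* Multiplicative (ZMod p) × Multiplicative (ZMod p),
      ∀ z : G, f z = (Multiplicative.ofAdd ((key ⁅x, z⁆ : ℤ) : ZMod p),
        Multiplicative.ofAdd ((key ⁅y, z⁆ : ℤ) : ZMod p)) := by
    refine ⟨⟨⟨fun z => (Multiplicative.ofAdd ((key ⁅x, z⁆ : ℤ) : ZMod p),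
      Multiplicative.ofAdd ((key ⁅y, z⁆ : ℤ) : ZMod p)), ?_⟩, ?_⟩, fun z => rfl⟩
    · have e1 := hν1 x
      have e2 := hν1 y
      simp only [e1, e2, ofAdd_zero]
      rfl
    · intro z w
      simp only [Prod.mk_mul_mk, ← ofAdd_add, hν x z w, hν y z w]
  -- kernel is the second center
  have hker : f.ker = Subgroup.upperCentralSeries G 2 := by
    ext z
    rw [MonoidHom.mem_ker, hf z, Prod.mk_eq_one, ofAdd_eq_one, ofAdd_eq_one]
    constructor
    · rintro ⟨h1, h2⟩
      have hxz : ⁅x, z⁆ ∈ Subgroup.center G := (nu_zero_iff _ (hmemD x z)).mp h1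
      have hyz : ⁅y, z⁆ ∈ Subgroup.center G := (nu_zero_iff _ (hmemD y z)).mp h2
      have hzx : ⁅z, x⁆ ∈ Subgroup.center G := by
        rw [← commutatorElement_inv]; exact inv_mem hxz
      have j1 := jac x y z
      rw [centerComm' hyz x, centerComm' hzx y, inv_one, mul_one, mul_one, inv_eq_one] at j1
      -- j1 : ⁅⁅x,y⁆,z⁆ = 1
      have hbz : ⁅(b : G), z⁆ = 1 := by
        have hdec : ⁅x, y⁆ = (b : G) ^ (key ⁅x, y⁆) *
            (((b : G) ^ (key ⁅x, y⁆))⁻¹ * ⁅x, y⁆) := by group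
        rw [hdec, centerDrop' (hkey _ (hmemD x y)), commZpowAux _ _ (hcenj z)] at j1
        have hdvd1 : (↑(orderOf ⁅(b : G), z⁆) : ℤ) ∣ key ⁅x, y⁆ :=
          orderOf_dvd_iff_zpow_eq_one.mpr j1
        have hdvd2 : orderOf ⁅(b : G), z⁆ ∣ p := orderOf_dvd_of_pow_eq_one (by
          rw [← zpow_natCast, ← commZpowAux _ _ (hcenj z), zpow_natCast]
          exact centerComm' ha₀p z)
        rcases hp.eq_one_or_self_of_dvd _ hdvd2 with h | h
        · exact orderOf_eq_one_iff.mp h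
        · exfalso
          apply hκ
          apply (ZMod.intCast_zmod_eq_zero_iff_dvd _ p).mpr
          rw [← h]
          exact_mod_cast hdvd1
      apply Subgroup.mem_upperCentralSeries_succ_iff.mpr
      intro w
      rw [Subgroup.upperCentralSeries_one]
      have j2 := jac w z x
      have e2 : ⁅⁅z, x⁆, w⁆ = 1 := centerComm' hzx w
      have e3 : ⁅⁅x, w⁆, z⁆ = 1 := by
        have hdec : ⁅x, w⁆ = (b : G) ^ (key ⁅x, w⁆) *
            (((b : G) ^ (key ⁅x, w⁆))⁻¹ * ⁅x, w⁆) := by group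
        rw [hdec, centerDrop' (hkey _ (hmemD x w)), commZpowAux _ _ (hcenj z), hbz, one_zpow]
      rw [e2, e3, inv_one, mul_one, mul_one, inv_eq_one] at j2
      -- j2 : ⁅⁅w,z⁆,x⁆ = 1
      have hdec2 : ⁅w, z⁆ = (b : G) ^ (key ⁅w, z⁆) *
          (((b : G) ^ (key ⁅w, z⁆))⁻¹ * ⁅w, z⁆) := by group
      rw [hdec2, centerDrop' (hkey _ (hmemD w z)), commZpowAux _ _ (hcenj x)] at j2
      have hdvd : (↑(orderOf ⁅(b : G), x⁆) : ℤ) ∣ key ⁅w, z⁆ :=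
        orderOf_dvd_iff_zpow_eq_one.mpr j2
      rw [horder] at hdvd
      have hbwz : (b : G) ^ (key ⁅w, z⁆) ∈ Subgroup.center G := (hpow_center _).mpr hdvd
      have hwz : ⁅w, z⁆ ∈ Subgroup.center G := by
        rw [hdec2]
        exact mul_mem hbwz (hkey _ (hmemD w z))
      have hzw : ⁅z, w⁆ ∈ Subgroup.center G := by
        rw [← commutatorElement_inv]; exact inv_mem hwz
      simpa [commutatorElement_def] using hzw
    · intro hz
      have hzx : ⁅z, x⁆ ∈ Subgroup.center G := by
        have := Subgroup.mem_upperCentralSeries_succ_iff.mp hz x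
        rw [Subgroup.upperCentralSeries_one] at this
        simpa [commutatorElement_def] using this
      have hzy : ⁅z, y⁆ ∈ Subgroup.center G := by
        have := Subgroup.mem_upperCentralSeries_succ_iff.mp hz y
        rw [Subgroup.upperCentralSeries_one] at this
        simpa [commutatorElement_def] using this
      constructor
      · exact (nu_zero_iff _ (hmemD x z)).mpr
          (by rw [← commutatorElement_inv]; exact inv_mem hzx)
      · exact (nu_zero_iff _ (hmemD y z)).mpr
          (by rw [← commutatorElement_inv]; exact inv_mem hzy)
  -- surjectivity
  have hxx : ((key ⁅x, x⁆ : ℤ) : ZMod p) = 0 := by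
    rw [show ⁅x, x⁆ = (1 : G) by group]
    exact (nu_zero_iff _ (one_mem _)).mpr (one_mem _)
  have hyy : ((key ⁅y, y⁆ : ℤ) : ZMod p) = 0 := by
    rw [show ⁅y, y⁆ = (1 : G) by group]
    exact (nu_zero_iff _ (one_mem _)).mpr (one_mem _)
  have hyx : ((key ⁅y, x⁆ : ℤ) : ZMod p) = -((key ⁅x, y⁆ : ℤ) : ZMod p) := by
    have h2 := nu_add _ _ (hmemD y x) (hmemD x y)
    rw [show ⁅y, x⁆ * ⁅x, y⁆ = (1 : G) by group] at h2
    have h1 : ((key (1 : G) : ℤ) : ZMod p) = 0 := (nu_zero_iff _ (one_mem _)).mpr (one_mem _)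
    rw [h1] at h2
    linear_combination -h2
  have hsurj : Function.Surjective f := by
    rintro ⟨α, β⟩
    set κ : ZMod p := ((key ⁅x, y⁆ : ℤ) : ZMod p) with hκdef
    refine ⟨y ^ (Multiplicative.toAdd α * κ⁻¹).val * x ^ (Multiplicative.toAdd β * (-κ)⁻¹).val, ?_⟩
    rw [map_mul, map_pow, map_pow, hf y, hf x]
    rw [hyy, hxx, hyx, ← hκdef]
    rw [Prod.pow_mk, Prod.pow_mk, Prod.mk_mul_mk]
    have hval : ∀ (n : ℕ) (c : ZMod p),
        (Multiplicative.ofAdd c) ^ n = Multiplicative.ofAdd ((n : ZMod p) * c) := by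
      intro n c
      rw [← ofAdd_nsmul, nsmul_eq_mul]
    have hnegκ : -κ ≠ 0 := neg_ne_zero.mpr hκ
    have hvalcast : ∀ u : ZMod p, ((u.val : ℕ) : ZMod p) = u := fun u =>
      ZMod.natCast_rightInverse u
    rw [Prod.mk.injEq]
    constructor
    · rw [hval, hval, hvalcast, hvalcast, mul_zero, ofAdd_zero, mul_one, mul_assoc,
        inv_mul_cancel₀ hκ, mul_one, ofAdd_toAdd]
    · rw [hval, hval, hvalcast, hvalcast, mul_zero, ofAdd_zero, one_mul, mul_assoc,
        inv_mul_cancel₀ hnegκ, mul_one, ofAdd_toAdd]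
  -- conclusion
  have hrange : f.range = ⊤ := MonoidHom.range_eq_top.mpr hsurj
  have hM : Nat.card (Multiplicative (ZMod p)) = p := by
    rw [Nat.card_congr Multiplicative.toAdd, Nat.card_zmod]
  rw [← hker, Subgroup.index_ker, hrange, Subgroup.card_top, Nat.card_prod, hM, sq]
end
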